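/- Let Z be a real-valued random variable on a probability space, let 𝒢 be a sub-σ-algebra, let F(t) = P(Z ≤ t) be the distribution function of Z, F^v(t) = P(Z ≤ t | 𝒢), and D = ∫_ℝ E[(F(t) − F^v(t))²] dF(t) where dF denotes integration with respect to the law of Z. If F is continuous, then 0 ≤ D ≤ 1/6. -/

import Mathlib

/-!
`F^v(t)` is the conditional expectation of the `[0, 1]`-valued indicator of `{Z ≤ t}`, whose mean
is `F(t)`, so by the Bhatia–Davis inequality its variance `E[(F(t) − F^v(t))²]` is at most
`F(t)(1 − F(t))`. When `F` is continuous, `F(Z)` is uniform on `[0, 1]` (probability integral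
transform), hence `∫ F(1 − F) dF = ∫₀¹ u(1 − u) du = 1/6`.
-/

open MeasureTheory ProbabilityTheory Filter Set

section CondExp

variable {Ω : Type*} {m m₀ : MeasurableSpace Ω} {P : Measure Ω} {f : Ω → ℝ} {a b : ℝ}

lemma ae_condExp_mem_Icc [IsFiniteMeasure P] (hm : m ≤ m₀) (hfi : Integrable f P)
    (hf : ∀ᵐ ω ∂P, f ω ∈ Icc a b) :
    ∀ᵐ ω ∂P, P[f|m] ω ∈ Icc a b := by
  have hle : P[fun _ ↦ a|m] ≤ᵐ[P] P[f|m] :=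
    condExp_mono (integrable_const a) hfi (hf.mono fun _ h ↦ h.1)
  have hge : P[f|m] ≤ᵐ[P] P[fun _ ↦ b|m] :=
    condExp_mono hfi (integrable_const b) (hf.mono fun _ h ↦ h.2)
  rw [condExp_const hm] at hle hge
  filter_upwards [hle, hge] with ω h₁ h₂ using ⟨h₁, h₂⟩

lemma integral_sq_sub_condExp_le [IsProbabilityMeasure P] (hm : m ≤ m₀) (hfi : Integrable f P)
    (hf : ∀ᵐ ω ∂P, f ω ∈ Icc a b) :
    ∫ ω, (P[f] - P[f|m] ω) ^ 2 ∂P ≤ (b - P[f]) * (P[f] - a) := by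
  have hmeas : AEMeasurable P[f|m] P := integrable_condExp.aemeasurable
  have hmean : P[P[f|m]] = P[f] := integral_condExp hm
  have hvar := variance_le_sub_mul_sub (ae_condExp_mem_Icc hm hfi hf) hmeas
  rw [variance_eq_integral hmeas, hmean] at hvar
  simpa only [sub_sq_comm (P[f|m] _)] using hvar

end CondExp

section ProbabilityIntegralTransform

lemma exists_preimage_Iic_eq_Iic {α β : Type*} [ConditionallyCompleteLinearOrder α]
    [TopologicalSpace α] [OrderTopology α] [DenselyOrdered α]
    [LinearOrder β] [TopologicalSpace β] [OrderClosedTopology β]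
    {F : α → β} (hmono : Monotone F) (hcont : Continuous F) {y : β}
    (hne : ∃ a, F a ≤ y) (hlt : ∃ b, y < F b) :
    ∃ c, F c = y ∧ F ⁻¹' Iic y = Iic c := by
  obtain ⟨b, hb⟩ := hlt
  set S := F ⁻¹' Iic y
  have hbdd : BddAbove S := ⟨b, fun t ht ↦ hmono.reflect_lt (ht.trans_lt hb) |>.le⟩
  have hc : sSup S ∈ S := (isClosed_Iic.preimage hcont).csSup_mem hne hbdd
  have hcb : sSup S ≤ b := (hmono.reflect_lt (lt_of_le_of_lt hc hb)).le
  obtain ⟨e, he, hFe⟩ := intermediate_value_Icc hcb hcont.continuousOn ⟨hc, hb.le⟩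
  have hec : e = sSup S := le_antisymm (le_csSup hbdd hFe.le) he.1
  refine ⟨sSup S, hec ▸ hFe, subset_antisymm (fun t ht ↦ le_csSup hbdd ht) fun t ht ↦ ?_⟩
  exact (hmono ht).trans hc

variable (μ : Measure ℝ) [IsProbabilityMeasure μ]

lemma measure_preimage_cdf_Iic (hcont : Continuous (cdf μ)) {y : ℝ} (hy : y < 1) :
    μ (cdf μ ⁻¹' Iic y) = ENNReal.ofReal y := by
  by_cases hne : ∃ a, cdf μ a ≤ y
  · obtain ⟨c, hFc, hS⟩ := exists_preimage_Iic_eq_Iic (monotone_cdf μ) hcont hne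
      ((tendsto_cdf_atTop μ).eventually (eventually_gt_nhds hy)).exists
    rw [hS, ← ofReal_cdf, hFc]
  · push Not at hne
    have hy0 : y ≤ 0 := le_of_not_gt fun hy0 ↦
      (((tendsto_cdf_atBot μ).eventually (eventually_lt_nhds hy0)).exists.elim
        fun a ha ↦ (hne a).not_gt ha)
    have hS : cdf μ ⁻¹' Iic y = ∅ := eq_empty_of_forall_notMem fun t ht ↦ (hne t).not_ge ht
    rw [hS, measure_empty, ENNReal.ofReal_of_nonpos hy0]

theorem map_cdf_eq_restrict_Icc (hcont : Continuous (cdf μ)) :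
    μ.map (cdf μ) = volume.restrict (Icc 0 1) := by
  refine Measure.ext_of_Iic _ _ fun y ↦ ?_
  rw [Measure.map_apply hcont.measurable measurableSet_Iic,
    Measure.restrict_apply measurableSet_Iic]
  rcases lt_or_ge y 1 with hy | hy
  · have hIcc : Iic y ∩ Icc 0 1 = Icc 0 y := by
      ext x
      simp only [mem_inter_iff, mem_Iic, mem_Icc]
      grind
    rw [measure_preimage_cdf_Iic μ hcont hy, hIcc, Real.volume_Icc, sub_zero]
  · rw [preimage_eq_univ_iff.mpr fun _ ⟨t, ht⟩ ↦ ht ▸ (cdf_le_one μ t).trans hy,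
      inter_eq_right.mpr (Icc_subset_Iic_self.trans (Iic_subset_Iic.mpr hy))]
    simp

lemma integrable_cdf_mul_one_sub_cdf :
    Integrable (fun t ↦ cdf μ t * (1 - cdf μ t)) μ := by
  refine .of_bound ((monotone_cdf μ).measurable.mul
    (measurable_const.sub (monotone_cdf μ).measurable)).aestronglyMeasurable 1 (ae_of_all _ ?_)
  intro t
  have h₀ := cdf_nonneg μ t
  have h₁ := cdf_le_one μ t
  rw [Real.norm_of_nonneg (by nlinarith)]
  nlinarith

theorem integral_cdf_mul_one_sub_cdf (hcont : Continuous (cdf μ)) :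
    ∫ t, cdf μ t * (1 - cdf μ t) ∂μ = 1 / 6 := by
  have hg : Continuous fun u : ℝ ↦ u * (1 - u) := by fun_prop
  rw [← integral_map hcont.aemeasurable hg.aestronglyMeasurable, map_cdf_eq_restrict_Icc μ hcont,
    integral_Icc_eq_integral_Ioc,
    ← intervalIntegral.integral_of_le zero_le_one]
  simp only [mul_sub, mul_one, ← sq]
  rw [intervalIntegral.integral_sub intervalIntegral.intervalIntegrable_id
      (intervalIntegral.intervalIntegrable_pow 2), integral_id, integral_pow]
  norm_num

end ProbabilityIntegralTransform

theorem cramer_von_mises_index_bounds_continuous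
    {Ω : Type*} (G : MeasurableSpace Ω) [m0 : MeasurableSpace Ω]
    (P : Measure Ω) [IsProbabilityMeasure P] (hG : G ≤ m0)
    (Z : Ω → ℝ) (hZ : Measurable Z)
    (F : ℝ → ℝ) (hF : ∀ t, F t = (P {ω | Z ω ≤ t}).toReal) (hFcont : Continuous F)
    (Fv : ℝ → Ω → ℝ)
    (hFv : ∀ t, Fv t
      = MeasureTheory.condExp G P (Set.indicator {ω | Z ω ≤ t} fun _ => (1 : ℝ)))
    (D : ℝ) (hD : D = ∫ t, (∫ ω, (F t - Fv t ω) ^ 2 ∂P) ∂(Measure.map Z P)) :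
    0 ≤ D ∧ D ≤ 1 / 6 := by
  set μ := P.map Z
  have : IsProbabilityMeasure μ := Measure.isProbabilityMeasure_map hZ.aemeasurable
  have hF_cdf : F = cdf μ := funext fun t ↦ by
    rw [hF, cdf_eq_real, measureReal_def, Measure.map_apply hZ measurableSet_Iic]
    rfl
  have hvar (t : ℝ) : ∫ ω, (F t - Fv t ω) ^ 2 ∂P ≤ F t * (1 - F t) := by
    have hs : MeasurableSet {ω | Z ω ≤ t} := hZ measurableSet_Iic
    have hmean : P[{ω | Z ω ≤ t}.indicator fun _ ↦ (1 : ℝ)] = F t := by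
      rw [integral_indicator_const _ hs, hF, smul_eq_mul, mul_one, measureReal_def]
    have h := integral_sq_sub_condExp_le hG ((integrable_const (μ := P) 1).indicator hs)
      (ae_of_all _ fun ω ↦ ⟨indicator_nonneg (fun _ _ ↦ zero_le_one) ω,
        indicator_le_self' (fun _ _ ↦ zero_le_one) ω⟩)
    rw [hmean] at h
    simpa only [hFv, sub_zero, mul_comm (1 - F t)] using h
  subst hD
  refine ⟨integral_nonneg fun t ↦ integral_nonneg fun ω ↦ sq_nonneg _, ?_⟩
  calc ∫ t, (∫ ω, (F t - Fv t ω) ^ 2 ∂P) ∂μ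
      ≤ ∫ t, F t * (1 - F t) ∂μ :=
        integral_mono_of_nonneg (ae_of_all _ fun t ↦ integral_nonneg fun ω ↦ sq_nonneg _)
          (hF_cdf ▸ integrable_cdf_mul_one_sub_cdf μ) (ae_of_all _ hvar)
    _ = 1 / 6 := hF_cdf ▸ integral_cdf_mul_one_sub_cdf μ (hF_cdf ▸ hFcont)
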